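/- Speed limit for currents in open quantum systems: suppose dρ_t/dt = −(i/ℏ)[H + H_D, ρ_t] + D_d[ρ_t], where D_d[ρ_t] = ∑_m (∑_{ω,α,n≠m} (W^{ω,α}_{mn} p_n − W^{−ω,α}_{nm} p_m)) |m⟩⟨m| in the eigenbasis ρ_t = ∑ p_n|n⟩⟨n|, with all W's positive. Then for any Hermitian X, |Tr[X dρ_t/dt]| ≤ (1/ℏ)√(F_{ρ_t}(H+H_D))√(V_{ρ_t}(X)) + √((1/2)·σ̇·M_X), where σ̇ := ∑'_{ω,α,n,m} W^{ω,α}_{mn}p_n ln(W^{ω,α}_{mn}p_n / (W^{−ω,α}_{nm}p_m)) is the entropy production rate and M_X := 4∑_{ω,α,n≠m} |⟨m|X|m⟩|² f(W^{ω,α}_{mn}p_n, W^{−ω,α}_{nm}p_m). -/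

import Mathlib

open scoped ComplexOrder

/-- The logarithmic mean, with `logMean a a = a`. -/
noncomputable def logMean (a b : ℝ) : ℝ :=
  if a = b then a else (a - b) / (Real.log a - Real.log b)

open Matrix in
/-- SLD Fisher information in the eigenbasis of `ρ = ∑ p i |i⟩⟨i|`. -/
noncomputable def sldFisher {d : ℕ} (p : Fin d → ℝ) (H : Matrix (Fin d) (Fin d) ℂ) : ℝ :=
  ∑ i, ∑ j, 2 * (p i - p j) ^ 2 / (p i + p j) * Complex.normSq (H i j)

open Matrix in
/-- Variance `V_ρ(X) = Tr[ρX²] − (Tr[ρX])²`. -/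
noncomputable def qVar {d : ℕ} (ρ X : Matrix (Fin d) (Fin d) ℂ) : ℝ :=
  ((ρ * X * X).trace).re - (((ρ * X).trace).re) ^ 2

/-!
Split `Tr[X ρ̇]` into the coherent part `-(i/ℏ) Tr[X [K, ρ]]`, `K = H + H_D`, and the
dissipative part `Tr[X D_d]`.

Since `Tr [K, ρ] = 0`, `X` may be replaced by the centred `Y = X - Tr[ρ X]`. In the eigenbasis of `ρ`
the coherent part is `∑ (p_j - p_i) K_ij Y_ji`, and Cauchy–Schwarz with weights `(p_i + p_j)/2`
bounds it by `√F · √(Tr[ρ Y²]) = √F · √V`.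

For the dissipative part write `|a - b| = √((a - b)(ln a - ln b)) · √(L(a, b))`, `L` the logarithmic
mean; Cauchy–Schwarz bounds it by `√(∑ (a - b)(ln a - ln b)) · √(M_X / 4)`, and pairing each jump
`(ω, α, n → m)` with its reverse `(-ω, α, m → n)` turns the first sum into `2 σ̇`.
-/

open Finset Matrix

lemma logMean_pos {a b : ℝ} (ha : 0 < a) (hb : 0 < b) : 0 < logMean a b := by
  unfold logMean
  split_ifs with hab
  · exact ha
  · rcases lt_or_gt_of_ne hab with hlt | hgt
    · exact div_pos_of_neg_of_neg (by linarith) (by linarith [Real.log_lt_log ha hlt])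
    · exact div_pos (by linarith) (by linarith [Real.log_lt_log hb hgt])

lemma sq_sub_div_logMean {a b : ℝ} (ha : 0 < a) (hb : 0 < b) :
    (a - b) ^ 2 / logMean a b = (a - b) * (Real.log a - Real.log b) := by
  unfold logMean
  split_ifs with hab
  · simp [hab]
  · have hlog : Real.log a - Real.log b ≠ 0 := sub_ne_zero.2 fun h =>
      hab (Real.log_injOn_pos (Set.mem_Ioi.2 ha) (Set.mem_Ioi.2 hb) h)
    have : a - b ≠ 0 := sub_ne_zero.2 hab
    field_simp

lemma sum_mul_le_sqrt_sum_sq_div_mul_sqrt_sum_mul_sq {ι : Type*} (s : Finset ι)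
    (u v w : ι → ℝ) (hw : ∀ i ∈ s, 0 < w i) :
    ∑ i ∈ s, u i * v i ≤ √(∑ i ∈ s, u i ^ 2 / w i) * √(∑ i ∈ s, w i * v i ^ 2) := by
  calc ∑ i ∈ s, u i * v i = ∑ i ∈ s, u i / √(w i) * (√(w i) * v i) := by
        refine sum_congr rfl fun i hi => ?_
        have := Real.sqrt_pos.2 (hw i hi)
        field_simp
    _ ≤ _ := Real.sum_mul_le_sqrt_mul_sqrt _ _ _
    _ = _ := by
        congr 2 <;> refine sum_congr rfl fun i hi => ?_
        · rw [div_pow, Real.sq_sqrt (hw i hi).le]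
        · rw [mul_pow, Real.sq_sqrt (hw i hi).le]

lemma sum_abs_mul_abs_sub_le_sqrt_mul_sqrt_logMean {T : Type*} (s : Finset T) (x a b : T → ℝ)
    (ha : ∀ t ∈ s, 0 < a t) (hb : ∀ t ∈ s, 0 < b t) :
    ∑ t ∈ s, |a t - b t| * |x t| ≤
      √(∑ t ∈ s, (a t - b t) * (Real.log (a t) - Real.log (b t))) *
        √(∑ t ∈ s, x t ^ 2 * logMean (a t) (b t)) := by
  refine (sum_mul_le_sqrt_sum_sq_div_mul_sqrt_sum_mul_sq s _ _ _
    fun t ht => logMean_pos (ha t ht) (hb t ht)).trans_eq ?_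
  congr 2 <;> refine sum_congr rfl fun t ht => ?_
  · rw [sq_abs, sq_sub_div_logMean (ha t ht) (hb t ht)]
  · rw [sq_abs, mul_comm]

lemma sum_sub_mul_log_sub_of_involutive {T : Type*} (s : Finset T) (e : T → T)
    (hes : ∀ t ∈ s, e t ∈ s) (hee : ∀ t, e (e t) = t) (a : T → ℝ) (ha : ∀ t ∈ s, 0 < a t) :
    ∑ t ∈ s, (a t - a (e t)) * (Real.log (a t) - Real.log (a (e t))) =
      2 * ∑ t ∈ s, a t * Real.log (a t / a (e t)) := by
  have hswap : ∑ t ∈ s, a (e t) * Real.log (a (e t) / a t) =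
      ∑ t ∈ s, a t * Real.log (a t / a (e t)) :=
    sum_nbij' e e hes hes (fun t _ => hee t) (fun t _ => hee t) fun t _ => by rw [hee]
  rw [two_mul]
  nth_rewrite 2 [← hswap]
  rw [← sum_add_distrib]
  refine sum_congr rfl fun t ht => ?_
  rw [Real.log_div (ha t ht).ne' (ha _ (hes t ht)).ne',
    Real.log_div (ha _ (hes t ht)).ne' (ha t ht).ne']
  ring

section Matrix

variable {n : Type*} [Fintype n] [DecidableEq n]

lemma trace_mul_commutator_diagonal {R : Type*} [CommRing R] (Y K : Matrix n n R) (q : n → R) :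
    (Y * (K * diagonal q - diagonal q * K)).trace = ∑ i, ∑ j, (q j - q i) * K i j * Y j i := by
  have hcomm : ∀ i j, (K * diagonal q - diagonal q * K) i j = (q j - q i) * K i j := fun i j => by
    rw [Matrix.sub_apply, mul_diagonal, diagonal_mul]
    ring
  rw [trace_mul_comm]
  simp only [trace, Matrix.diag, mul_apply, hcomm]

lemma trace_sub_smul_one_mul_commutator {R : Type*} [CommRing R] (X K ρ : Matrix n n R) (c : R) :
    ((X - c • 1) * (K * ρ - ρ * K)).trace = (X * (K * ρ - ρ * K)).trace := by
  rw [sub_mul, trace_sub, smul_mul, one_mul, trace_smul, trace_sub, trace_mul_comm K ρ, sub_self,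
    smul_zero, sub_zero]

lemma re_trace_diagonal_mul_mul_self {Y : Matrix n n ℂ} (hY : Y.IsHermitian) (q : n → ℝ) :
    (diagonal (fun i => (q i : ℂ)) * Y * Y).trace.re =
      ∑ i, ∑ j, (q i + q j) / 2 * Complex.normSq (Y j i) := by
  have hnormSq : ∀ i j, Complex.normSq (Y j i) = Complex.normSq (Y i j) := fun i j => by
    rw [← hY.apply i j, Complex.star_def, Complex.normSq_conj]
  have htrace : (diagonal (fun i => (q i : ℂ)) * Y * Y).trace.re =
      ∑ i, ∑ j, q i * Complex.normSq (Y i j) := by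
    rw [Matrix.mul_assoc]
    simp only [trace, Matrix.diag, diagonal_mul]
    simp only [mul_apply, mul_sum, Complex.re_sum]
    refine sum_congr rfl fun i _ => sum_congr rfl fun j _ => ?_
    rw [← hY.apply j i, Complex.star_def, Complex.mul_conj, ← Complex.ofReal_mul,
      Complex.ofReal_re]
  rw [htrace]
  simp only [add_div, add_mul, sum_add_distrib]
  rw [sum_comm (f := fun i j => q j / 2 * Complex.normSq (Y j i))]
  simp only [hnormSq]
  rw [← sum_add_distrib]
  refine sum_congr rfl fun i _ => ?_
  rw [← sum_add_distrib]
  exact sum_congr rfl fun j _ => by ring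

end Matrix

lemma qVar_eq_re_trace_mul_sub_smul_one_sq {d : ℕ} {ρ : Matrix (Fin d) (Fin d) ℂ}
    (hρ : ρ.trace = 1) (X : Matrix (Fin d) (Fin d) ℂ) :
    let Y := X - ((ρ * X).trace.re : ℂ) • 1
    qVar ρ X = (ρ * Y * Y).trace.re := by
  simp only [qVar, Matrix.mul_sub, Matrix.sub_mul, Matrix.mul_smul, Matrix.smul_mul,
    Matrix.mul_assoc, trace_sub, trace_smul, hρ, smul_eq_mul, Complex.sub_re,
    Complex.re_ofReal_mul, Complex.ofReal_re, mul_one]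
  ring

lemma norm_trace_mul_commutator_le {d : ℕ} (p : Fin d → ℝ) (hp : ∀ i, 0 < p i)
    (hsum : ∑ i, p i = 1) (K : Matrix (Fin d) (Fin d) ℂ) {X : Matrix (Fin d) (Fin d) ℂ}
    (hX : X.IsHermitian) :
    let ρ : Matrix (Fin d) (Fin d) ℂ := diagonal fun i => (p i : ℂ)
    ‖(X * (K * ρ - ρ * K)).trace‖ ≤ √(sldFisher p K) * √(qVar ρ X) := by
  intro ρ
  set c : ℂ := ((ρ * X).trace.re : ℂ)
  set Y := X - c • 1
  have hY : Y.IsHermitian := hX.sub (isHermitian_one.smul (Complex.conj_ofReal _))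
  have hρ : ρ.trace = 1 := by simp [ρ, trace_diagonal, ← Complex.ofReal_sum, hsum]
  have hw : ∀ t ∈ (univ : Finset (Fin d × Fin d)), 0 < (p t.1 + p t.2) / 2 :=
    fun t _ => by linarith [hp t.1, hp t.2]
  rw [← trace_sub_smul_one_mul_commutator X K ρ c, trace_mul_commutator_diagonal,
    qVar_eq_re_trace_mul_sub_smul_one_sq hρ, re_trace_diagonal_mul_mul_self hY]
  calc ‖∑ i, ∑ j, ((p j : ℂ) - p i) * K i j * Y j i‖
      ≤ ∑ i, ∑ j, |p i - p j| * ‖K i j‖ * ‖Y j i‖ := by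
        refine (norm_sum_le _ _).trans (sum_le_sum fun i _ => (norm_sum_le _ _).trans_eq ?_)
        refine sum_congr rfl fun j _ => ?_
        rw [norm_mul, norm_mul, ← Complex.ofReal_sub, Complex.norm_real, Real.norm_eq_abs,
          abs_sub_comm]
    _ = ∑ t : Fin d × Fin d, (|p t.1 - p t.2| * ‖K t.1 t.2‖) * ‖Y t.2 t.1‖ :=
        (Fintype.sum_prod_type' (fun i j => |p i - p j| * ‖K i j‖ * ‖Y j i‖)).symm
    _ ≤ _ := sum_mul_le_sqrt_sum_sq_div_mul_sqrt_sum_mul_sq _ _ _ _ hw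
    _ = _ := by
        simp only [sldFisher, Fintype.sum_prod_type, mul_pow, sq_abs, Complex.sq_norm]
        congr 2
        exact sum_congr rfl fun i _ => sum_congr rfl fun j _ => by rw [div_div_eq_mul_div]; ring

section Dissipator

variable {S J : Type*} [Fintype S] [DecidableEq S] [Fintype J]

lemma sum_ite_eq_zero_eq_sum_filter_ne (F : J → S → S → ℝ) :
    ∑ j, ∑ k, ∑ m, (if k = m then 0 else F j k m) =
      ∑ t ∈ univ.filter (fun t : J × S × S => t.2.1 ≠ t.2.2), F t.1 t.2.1 t.2.2 := by
  simp only [sum_filter, Fintype.sum_prod_type, ite_not]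

lemma norm_trace_mul_dissipator_le (p : S → ℝ) (hp : ∀ i, 0 < p i) (ι : J → J)
    (hι : ∀ j, ι (ι j) = j) (W : J → S → S → ℝ) (hW : ∀ j m n, 0 < W j m n)
    (X : Matrix S S ℂ) :
    ‖(X * diagonal fun m =>
        ((∑ j, ∑ n, if n = m then 0 else (W j m n * p n - W (ι j) n m * p m) : ℝ) : ℂ)).trace‖ ≤
      √((1 / 2) * (∑ j, ∑ n, ∑ m, if m = n then 0
          else W j m n * p n * Real.log (W j m n * p n / (W (ι j) n m * p m))) *
        (4 * ∑ j, ∑ n, ∑ m, if n = m then 0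
          else Complex.normSq (X m m) * logMean (W j m n * p n) (W (ι j) n m * p m))) := by
  set s := univ.filter (fun t : J × S × S => t.2.1 ≠ t.2.2)
  let e : J × S × S → J × S × S := fun t => (ι t.1, t.2.2, t.2.1)
  let a : J × S × S → ℝ := fun t => W t.1 t.2.2 t.2.1 * p t.2.1
  have ha : ∀ t ∈ s, 0 < a t := fun t _ => mul_pos (hW _ _ _) (hp _)
  have hes : ∀ t ∈ s, e t ∈ s := fun t ht => by
    simpa [s, e, eq_comm] using ht
  have hee : ∀ t, e (e t) = t := fun t => by simp [e, hι]
  have hσ : (∑ j, ∑ n, ∑ m, if m = n then 0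
      else W j m n * p n * Real.log (W j m n * p n / (W (ι j) n m * p m))) =
      ∑ t ∈ s, a t * Real.log (a t / a (e t)) := by
    simp_rw [@eq_comm _ _ (_ : S)]
    exact sum_ite_eq_zero_eq_sum_filter_ne _
  have hM : (∑ j, ∑ n, ∑ m, if n = m then 0
      else Complex.normSq (X m m) * logMean (W j m n * p n) (W (ι j) n m * p m)) =
      ∑ t ∈ s, ‖X t.2.2 t.2.2‖ ^ 2 * logMean (a t) (a (e t)) := by
    simp only [Complex.sq_norm]
    exact sum_ite_eq_zero_eq_sum_filter_ne _
  have hflux : ∑ m, ‖X m m‖ * |∑ j, ∑ n,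
      if n = m then (0 : ℝ) else W j m n * p n - W (ι j) n m * p m| ≤
      ∑ t ∈ s, |a t - a (e t)| * |‖X t.2.2 t.2.2‖| := by
    calc _ ≤ ∑ m, ∑ j, ∑ n, if n = m then (0 : ℝ)
          else |W j m n * p n - W (ι j) n m * p m| * |‖X m m‖| := by
          refine sum_le_sum fun m _ => ?_
          refine (mul_le_mul_of_nonneg_left ((abs_sum_le_sum_abs _ _).trans
            (sum_le_sum fun j _ => abs_sum_le_sum_abs _ _)) (norm_nonneg _)).trans_eq ?_
          simp only [mul_sum]
          refine sum_congr rfl fun j _ => sum_congr rfl fun n _ => ?_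
          split_ifs <;> simp [mul_comm]
      _ = _ := by
          rw [sum_comm]
          exact (sum_congr rfl fun j _ => sum_comm).trans (sum_ite_eq_zero_eq_sum_filter_ne _)
  rw [hσ, hM, show ∀ σ M : ℝ, 1 / 2 * σ * (4 * M) = (2 * σ) * M by intros; ring,
    ← sum_sub_mul_log_sub_of_involutive s e hes hee a ha]
  calc _ ≤ ∑ m, ‖X m m‖ * |∑ j, ∑ n,
        if n = m then (0 : ℝ) else W j m n * p n - W (ι j) n m * p m| := by
        simp only [trace, Matrix.diag, mul_diagonal]
        refine (norm_sum_le _ _).trans_eq (sum_congr rfl fun m _ => ?_)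
        rw [norm_mul, Complex.norm_real, Real.norm_eq_abs]
    _ ≤ _ := hflux
    _ ≤ _ := sum_abs_mul_abs_sub_le_sqrt_mul_sqrt_logMean s _ a _ ha fun t ht => ha _ (hes t ht)
    _ = _ := (Real.sqrt_mul' _ (sum_nonneg fun t ht =>
        mul_nonneg (sq_nonneg _) (logMean_pos (ha t ht) (ha _ (hes t ht))).le)).symm

end Dissipator

open Matrix in
/-- The jump labels `(ω, α)` form the finite type `J`, with the involution `ι` implementing
`ω ↦ -ω`; `W j m n` stands for `W^{ω,α}_{mn}`, and `ρ_t = diagonal p` in its eigenbasis. -/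
theorem current_speed_limit_general {d : ℕ} (p : Fin d → ℝ)
    (hp : ∀ i, 0 < p i) (hsum : ∑ i, p i = 1)
    (J : Type) [Fintype J] (ι : J → J) (hι : ∀ j, ι (ι j) = j)
    (W : J → Fin d → Fin d → ℝ) (hW : ∀ j m n, 0 < W j m n)
    (H HD X : Matrix (Fin d) (Fin d) ℂ)
    (hX : X.IsHermitian)
    (ℏ : ℝ) (hℏ : 0 < ℏ) :
    let ρ : Matrix (Fin d) (Fin d) ℂ := Matrix.diagonal fun n => (p n : ℂ)
    let Dd : Matrix (Fin d) (Fin d) ℂ := Matrix.diagonal fun m =>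
      ((∑ j, ∑ n, if n = m then 0 else (W j m n * p n - W (ι j) n m * p m) : ℝ) : ℂ)
    let ρ' : Matrix (Fin d) (Fin d) ℂ :=
      (-(Complex.I / (ℏ : ℂ))) • ((H + HD) * ρ - ρ * (H + HD)) + Dd
    let σdot : ℝ := ∑ j, ∑ n, ∑ m,
      if m = n then 0
      else W j m n * p n * Real.log (W j m n * p n / (W (ι j) n m * p m))
    let MX : ℝ := 4 * ∑ j, ∑ n, ∑ m,
      if n = m then 0
      else Complex.normSq (X m m) * logMean (W j m n * p n) (W (ι j) n m * p m)
    ‖(X * ρ').trace‖ ≤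
      (1 / ℏ) * Real.sqrt (sldFisher p (H + HD)) * Real.sqrt (qVar ρ X) +
        Real.sqrt ((1 / 2) * σdot * MX) := by
  intro ρ Dd ρ' σdot MX
  have hprefactor : ‖-(Complex.I / (ℏ : ℂ))‖ = 1 / ℏ := by
    rw [norm_neg, norm_div, Complex.norm_I, Complex.norm_real, Real.norm_eq_abs, abs_of_pos hℏ]
  have htrace : (X * ρ').trace =
      -(Complex.I / (ℏ : ℂ)) * (X * ((H + HD) * ρ - ρ * (H + HD))).trace + (X * Dd).trace := by
    rw [Matrix.mul_add, Matrix.mul_smul, trace_add, trace_smul, smul_eq_mul]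
  calc ‖(X * ρ').trace‖
      ≤ 1 / ℏ * ‖(X * ((H + HD) * ρ - ρ * (H + HD))).trace‖ + ‖(X * Dd).trace‖ := by
        rw [htrace, ← hprefactor, ← norm_mul]
        exact norm_add_le _ _
    _ ≤ 1 / ℏ * (√(sldFisher p (H + HD)) * √(qVar ρ X)) + √((1 / 2) * σdot * MX) := by
        gcongr
        · exact norm_trace_mul_commutator_le p hp hsum (H + HD) hX
        · exact norm_trace_mul_dissipator_le p hp ι hι W hW X
    _ = _ := by ring

open Matrix in
/-- Speed limit for currents in open quantum systems. The jump labels `(ω,α)`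
form a finite type `J` with the involution `ι` implementing `ω ↦ −ω`; the rates
`W j m n` stand for `W^{ω,α}_{mn}`, the state is `ρ_t = diagonal p` in its
eigenbasis, and
`dρ_t/dt = −(i/ℏ)[H+H_D,ρ_t] + D_d[ρ_t]` with
`D_d[ρ_t] = ∑_m (∑_{j,n≠m} (W j m n p_n − W (ι j) n m p_m)) |m⟩⟨m|`. Then
`|Tr[X dρ_t/dt]| ≤ (1/ℏ)√F √V + √(σ̇ M_X / 2)`. -/
theorem current_speed_limit {d : ℕ} (p : Fin d → ℝ)
    (hp : ∀ i, 0 < p i) (hsum : ∑ i, p i = 1) (hnd : Function.Injective p)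
    (J : Type) [Fintype J] (ι : J → J) (hι : ∀ j, ι (ι j) = j)
    (W : J → Fin d → Fin d → ℝ) (hW : ∀ j m n, 0 < W j m n)
    (H HD X : Matrix (Fin d) (Fin d) ℂ)
    (hH : H.IsHermitian) (hHD : HD.IsHermitian) (hX : X.IsHermitian)
    (ℏ : ℝ) (hℏ : 0 < ℏ) :
    let ρ : Matrix (Fin d) (Fin d) ℂ := Matrix.diagonal fun n => (p n : ℂ)
    let Dd : Matrix (Fin d) (Fin d) ℂ := Matrix.diagonal fun m =>
      ((∑ j, ∑ n, if n = m then 0 else (W j m n * p n - W (ι j) n m * p m) : ℝ) : ℂ)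
    let ρ' : Matrix (Fin d) (Fin d) ℂ :=
      (-(Complex.I / (ℏ : ℂ))) • ((H + HD) * ρ - ρ * (H + HD)) + Dd
    let σdot : ℝ := ∑ j, ∑ n, ∑ m,
      if m = n then 0
      else W j m n * p n * Real.log (W j m n * p n / (W (ι j) n m * p m))
    let MX : ℝ := 4 * ∑ j, ∑ n, ∑ m,
      if n = m then 0
      else Complex.normSq (X m m) * logMean (W j m n * p n) (W (ι j) n m * p m)
    ‖(X * ρ').trace‖ ≤
      (1 / ℏ) * Real.sqrt (sldFisher p (H + HD)) * Real.sqrt (qVar ρ X) +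
        Real.sqrt ((1 / 2) * σdot * MX) :=
  current_speed_limit_general p hp hsum J ι hι W hW H HD X hX ℏ hℏ
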